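/- Let D be a strongly connected digraph belonging to the class 𝒟, and let i, j be vertices of D. If C and C̃ are cycle chains from i to j, each of which is an alternating cycle chain with respect to some maximum matching of D, then C = C̃; that is, any alternating cycle chain between two given vertices of D is unique. -/

import Mathlib

open Matrix

/-- Adjacency in a digraph given by relation `G`: a 2-cycle between distinct `i` and `j`. -/
def Adjd {n : ℕ} (G : Fin n → Fin n → Prop) (i j : Fin n) : Prop :=
  i ≠ j ∧ G i j ∧ G j i

/-- `G` is a simple symmetric digraph: no loops and edges come in both directions. -/
def IsSSD {n : ℕ} (G : Fin n → Fin n → Prop) : Prop :=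
  (∀ i, ¬ G i i) ∧ ∀ i j, G i j → G j i

/-- A vertex is pendant if it is incident to exactly one 2-cycle. -/
def Pendant {n : ℕ} (G : Fin n → Fin n → Prop) (i : Fin n) : Prop :=
  ∃! j, Adjd G i j

/-- The class 𝒟: simple symmetric digraphs in which every non-pendant vertex is
adjacent to at least one pendant vertex. -/
def InClassD {n : ℕ} (G : Fin n → Fin n → Prop) : Prop :=
  IsSSD G ∧ ∀ i, ¬ Pendant G i → ∃ j, Adjd G i j ∧ Pendant G j

/-- Strong connectivity: a directed path from every vertex to every other vertex. -/
def StronglyConnected {n : ℕ} (G : Fin n → Fin n → Prop) : Prop :=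
  ∀ i j : Fin n, Relation.ReflTransGen G i j

/-- An unordered pair `e` is a 2-cycle of `G`. -/
def IsEdge {n : ℕ} (G : Fin n → Fin n → Prop) (e : Sym2 (Fin n)) : Prop :=
  ∃ i j, e = s(i, j) ∧ Adjd G i j

/-- A matching: a set of pairwise vertex-disjoint 2-cycles. -/
def IsMatching {n : ℕ} (G : Fin n → Fin n → Prop) (M : Finset (Sym2 (Fin n))) : Prop :=
  (∀ e ∈ M, IsEdge G e) ∧
  ∀ e ∈ M, ∀ f ∈ M, e ≠ f → ∀ v : Fin n, v ∈ e → v ∉ f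

/-- A maximum matching: a matching of maximum cardinality. -/
def IsMaxMatching {n : ℕ} (G : Fin n → Fin n → Prop) (M : Finset (Sym2 (Fin n))) : Prop :=
  IsMatching G M ∧ ∀ M', IsMatching G M' → M'.card ≤ M.card

/-- A cycle chain, recorded by its list of (distinct) vertices `i₁, …, i_{m+1}`. -/
def IsCycleChain {n : ℕ} (G : Fin n → Fin n → Prop) (c : List (Fin n)) : Prop :=
  c.Nodup ∧ 2 ≤ c.length ∧ c.Chain' (Adjd G)

/-- A cycle chain from `i` to `j`. -/
def IsCycleChainBtw {n : ℕ} (G : Fin n → Fin n → Prop) (i j : Fin n) (c : List (Fin n)) : Prop :=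
  IsCycleChain G c ∧ c.head? = some i ∧ c.getLast? = some j

/-- The list of 2-cycles of a cycle chain. -/
def chainEdges {n : ℕ} (c : List (Fin n)) : List (Sym2 (Fin n)) :=
  List.zipWith (fun a b => s(a, b)) c c.tail

/-- The cycle chain `c` is alternating with respect to `M`: its 2-cycles are alternately
in `M` and outside `M`, with the first and last 2-cycle in `M` (so its length is odd). -/
def IsAltChain {n : ℕ} (M : Finset (Sym2 (Fin n))) (c : List (Fin n)) : Prop :=
  Odd (chainEdges c).length ∧
  ∀ k (h : k < (chainEdges c).length), ((chainEdges c).get ⟨k, h⟩ ∈ M ↔ Even k)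

/-- The digraph of a square matrix: edge `(i,j)` iff `A i j ≠ 0`. -/
def DA {n : ℕ} (A : Matrix (Fin n) (Fin n) ℝ) : Fin n → Fin n → Prop :=
  fun i j => A i j ≠ 0

/-- The cycle product `a_{ij} a_{ji}` of a 2-cycle. -/
def cycProd {n : ℕ} (A : Matrix (Fin n) (Fin n) ℝ) (e : Sym2 (Fin n)) : ℝ :=
  Sym2.lift ⟨fun i j => A i j * A j i, fun i j => mul_comm _ _⟩ e

/-- The matching product η(M) of a matching `M`. -/
noncomputable def matchProd {n : ℕ} (A : Matrix (Fin n) (Fin n) ℝ)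
    (M : Finset (Sym2 (Fin n))) : ℝ :=
  ∏ e ∈ M, cycProd A e

/-- The (finite) collection of all maximum matchings of `D(A)`. -/
noncomputable def maxMatchings {n : ℕ} (A : Matrix (Fin n) (Fin n) ℝ) :
    Finset (Finset (Sym2 (Fin n))) :=
  {M | IsMaxMatching (DA A) M}.toFinite.toFinset

/-- Δ_A: the sum of the matching products over all maximum matchings of `D(A)`. -/
noncomputable def Delta {n : ℕ} (A : Matrix (Fin n) (Fin n) ℝ) : ℝ :=
  ∑ M ∈ maxMatchings A, matchProd A M

/-- 𝕄(i,j): maximum matchings with respect to which some cycle chain from `i` to `j`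
is an alternating cycle chain. -/
def MMset {n : ℕ} (A : Matrix (Fin n) (Fin n) ℝ) (i j : Fin n) :
    Set (Finset (Sym2 (Fin n))) :=
  {M | IsMaxMatching (DA A) M ∧ ∃ c, IsCycleChainBtw (DA A) i j c ∧ IsAltChain M c}

/-- `i` and `j` are maximally matchable: 𝕄(i,j) ≠ ∅. -/
def MaxMatchable {n : ℕ} (A : Matrix (Fin n) (Fin n) ℝ) (i j : Fin n) : Prop :=
  (MMset A i j).Nonempty

open scoped Classical in
/-- The (unique) alternating cycle chain from `i` to `j`, when it exists. -/
noncomputable def theChain {n : ℕ} (A : Matrix (Fin n) (Fin n) ℝ) (i j : Fin n) :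
    List (Fin n) :=
  if h : ∃ c, IsCycleChainBtw (DA A) i j c ∧ ∃ M ∈ MMset A i j, IsAltChain M c
  then h.choose else []

/-- The path product along a cycle chain: `a_{i₁ i₂} a_{i₂ i₃} ⋯ a_{i_m i_{m+1}}`. -/
def pathProd {n : ℕ} (A : Matrix (Fin n) (Fin n) ℝ) (c : List (Fin n)) : ℝ :=
  (List.zipWith (fun a b => A a b) c c.tail).prod

open scoped Classical in
/-- β_{ij} = (−1)^{(m−1)/2} P_m(i,j) for maximally matchable `i, j`, and `0` otherwise. -/
noncomputable def beta {n : ℕ} (A : Matrix (Fin n) (Fin n) ℝ) (i j : Fin n) : ℝ :=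
  if MaxMatchable A i j then
    (-1 : ℝ) ^ (((theChain A i j).length - 2) / 2) * pathProd A (theChain A i j)
  else 0

/-- β̄_{i,j}(M): product of the cycle products of the 2-cycles of `M` not contained in
the alternating cycle chain from `i` to `j`. -/
noncomputable def betaBar {n : ℕ} (A : Matrix (Fin n) (Fin n) ℝ) (i j : Fin n)
    (M : Finset (Sym2 (Fin n))) : ℝ :=
  ∏ e ∈ M.filter (fun e => e ∉ chainEdges (theChain A i j)), cycProd A e

/-- μ_{ij} = β_{ij} · Σ_{M ∈ 𝕄(i,j)} β̄_{i,j}(M). -/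
noncomputable def mu {n : ℕ} (A : Matrix (Fin n) (Fin n) ℝ) (i j : Fin n) : ℝ :=
  beta A i j * ∑ M ∈ (MMset A i j).toFinite.toFinset, betaBar A i j M

/-- `X` is a group inverse of `A`. -/
def IsGroupInverse {n : ℕ} (A X : Matrix (Fin n) (Fin n) ℝ) : Prop :=
  A * X * A = A ∧ X * A * X = X ∧ A * X = X * A

/-- A tree digraph: strongly connected and all of its cycles have length 2. -/
def IsTreeDigraph {n : ℕ} (G : Fin n → Fin n → Prop) : Prop :=
  StronglyConnected G ∧
  ∀ (a : Fin n) (l : List (Fin n)), (a :: l).Nodup → List.Chain G a l →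
    G ((a :: l).getLast (List.cons_ne_nil a l)) a → (a :: l).length = 2

/-- A star tree digraph: a tree digraph with a center adjacent to every other vertex,
every other vertex being adjacent only to the center. -/
def IsStarTree {n : ℕ} (G : Fin n → Fin n → Prop) : Prop :=
  IsTreeDigraph G ∧
  ∃ c : Fin n, (∀ j, j ≠ c → Adjd G c j) ∧ ∀ i j, Adjd G i j → i = c ∨ j = c

/-- A corona digraph: a simple symmetric digraph in which each non-pendant vertex is
adjacent to exactly one pendant vertex. -/
def IsCorona {n : ℕ} (G : Fin n → Fin n → Prop) : Prop :=
  IsSSD G ∧ ∀ i, ¬ Pendant G i → ∃! j, Adjd G i j ∧ Pendant G j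

/-- 𝕄(i): the maximum matchings in which vertex `i` is matched. -/
noncomputable def MMi {n : ℕ} (A : Matrix (Fin n) (Fin n) ℝ) (i : Fin n) :
    Finset (Finset (Sym2 (Fin n))) :=
  {M | IsMaxMatching (DA A) M ∧ ∃ e ∈ M, i ∈ e}.toFinite.toFinset

/-!
An edge `xy` of a maximum matching `M` in a digraph of class `𝒟` has a pendant endpoint:
otherwise `x` and `y` have pendant neighbours `p` and `q`, necessarily unmatched, and
`p x y q` is an `M`-augmenting path. An interior vertex of a cycle chain has two neighbours,
so is not pendant. Hence an alternating cycle chain has length 1, or length 3 with pendant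
endpoints, and a pendant vertex has only one neighbour to step to.
-/

section

variable {n : ℕ} {G : Fin n → Fin n → Prop}

theorem Adjd.symm {i j : Fin n} (h : Adjd G i j) : Adjd G j i := ⟨h.1.symm, h.2.2, h.2.1⟩

theorem Pendant.eq_of_adjd {p x y : Fin n} (hp : Pendant G p) (hx : Adjd G p x)
    (hy : Adjd G p y) : x = y :=
  hp.unique hx hy

theorem not_pendant_of_adjd_of_adjd {p x y : Fin n} (hx : Adjd G p x) (hy : Adjd G p y)
    (hxy : x ≠ y) : ¬ Pendant G p :=
  fun hp => hxy (hp.eq_of_adjd hx hy)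

namespace IsMatching

variable {M : Finset (Sym2 (Fin n))}

theorem adjd_of_mem (hM : IsMatching G M) {x y : Fin n} (h : s(x, y) ∈ M) : Adjd G x y := by
  obtain ⟨u, v, huv, hadj⟩ := hM.1 _ h
  rcases Sym2.eq_iff.mp huv with ⟨rfl, rfl⟩ | ⟨rfl, rfl⟩
  exacts [hadj, hadj.symm]

theorem mono (hM : IsMatching G M) {N : Finset (Sym2 (Fin n))} (hNM : N ⊆ M) :
    IsMatching G N :=
  ⟨fun e he => hM.1 e (hNM he), fun e he f hf => hM.2 e (hNM he) f (hNM hf)⟩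

theorem insert_edge (hM : IsMatching G M) {e : Sym2 (Fin n)} (he : IsEdge G e)
    (hfree : ∀ f ∈ M, ∀ v ∈ e, v ∉ f) : IsMatching G (insert e M) := by
  refine ⟨fun f hf => ?_, fun f hf f' hf' hne v hvf => ?_⟩
  · rcases Finset.mem_insert.mp hf with rfl | hf
    exacts [he, hM.1 f hf]
  · rcases Finset.mem_insert.mp hf with rfl | hfM <;>
      rcases Finset.mem_insert.mp hf' with rfl | hf'M
    · exact absurd rfl hne
    · exact hfree f' hf'M v hvf
    · exact fun hvf' => hfree f hfM v hvf' hvf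
    · exact hM.2 f hfM f' hf'M hne v hvf

theorem eq_of_pendant_mem (hM : IsMatching G M) {p u : Fin n} (hp : Pendant G p)
    (hpu : Adjd G p u) {f : Sym2 (Fin n)} (hf : f ∈ M) (hpf : p ∈ f) : f = s(p, u) := by
  obtain ⟨x, y, rfl, hxy⟩ := hM.1 f hf
  rcases Sym2.mem_iff.mp hpf with rfl | rfl
  · rw [hp.eq_of_adjd hxy hpu]
  · rw [hp.eq_of_adjd hxy.symm hpu, Sym2.eq_swap]

theorem forall_notMem_of_pendant (hM : IsMatching G M) {p u : Fin n} (hp : Pendant G p)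
    (hpu : Adjd G p u) {e : Sym2 (Fin n)} (he : e ∈ M) (hu : u ∈ e) (hpe : p ∉ e) :
    ∀ f ∈ M, p ∉ f := by
  intro f hf hpf
  have hfe : f ≠ e := by rintro rfl; exact hpe hpf
  exact hM.2 f hf e he hfe u (hM.eq_of_pendant_mem hp hpu hf hpf ▸ Sym2.mem_mk_right p u) hu

/-- Augmentation along the path `p x y q`. -/
theorem exists_card_gt (hM : IsMatching G M) {x y p q : Fin n} (hxy : s(x, y) ∈ M)
    (hpx : Adjd G p x) (hqy : Adjd G q y) (hpq : p ≠ q)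
    (hp : ∀ f ∈ M, p ∉ f) (hq : ∀ f ∈ M, q ∉ f) :
    ∃ N, IsMatching G N ∧ M.card < N.card := by
  have hp_ne_y : p ≠ y := by rintro rfl; exact hp _ hxy (Sym2.mem_mk_right x p)
  have hq_ne_x : q ≠ x := by rintro rfl; exact hq _ hxy (Sym2.mem_mk_left q y)
  have hold : ∀ v ∈ s(x, y), ∀ f ∈ M.erase s(x, y), v ∉ f := fun v hv f hf =>
    hM.2 _ hxy f (Finset.mem_of_mem_erase hf) (Finset.ne_of_mem_erase hf).symm v hv
  set N₁ := insert s(q, y) (M.erase s(x, y))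
  have hN₁ : IsMatching G N₁ := by
    refine (hM.mono (Finset.erase_subset _ _)).insert_edge ⟨q, y, rfl, hqy⟩ fun f hf v hv => ?_
    rcases Sym2.mem_iff.mp hv with rfl | rfl
    exacts [hq f (Finset.mem_of_mem_erase hf), hold v (Sym2.mem_mk_right x v) f hf]
  have hfree : ∀ f ∈ N₁, ∀ v ∈ s(p, x), v ∉ f := by
    intro f hf v hv
    rcases Finset.mem_insert.mp hf with rfl | hf <;> rcases Sym2.mem_iff.mp hv with rfl | rfl
    · simp [hpq, hp_ne_y]
    · simp [hq_ne_x.symm, (hM.adjd_of_mem hxy).1]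
    · exact hp f (Finset.mem_of_mem_erase hf)
    · exact hold v (Sym2.mem_mk_left v y) f hf
  refine ⟨insert s(p, x) N₁, hN₁.insert_edge ⟨p, x, rfl, hpx⟩ hfree, ?_⟩
  have hpx_notMem : s(p, x) ∉ N₁ :=
    fun h => hfree _ h p (Sym2.mem_mk_left p x) (Sym2.mem_mk_left p x)
  have hqy_notMem : s(q, y) ∉ M.erase s(x, y) :=
    fun h => hold y (Sym2.mem_mk_right x y) _ h (Sym2.mem_mk_right q y)
  rw [Finset.card_insert_of_notMem hpx_notMem, Finset.card_insert_of_notMem hqy_notMem,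
    Finset.card_erase_of_mem hxy]
  have := Finset.card_pos.mpr ⟨_, hxy⟩
  omega

end IsMatching

theorem IsMaxMatching.pendant_or_pendant (hD : InClassD G) {M : Finset (Sym2 (Fin n))}
    (hM : IsMaxMatching G M) {x y : Fin n} (hxy : s(x, y) ∈ M) : Pendant G x ∨ Pendant G y := by
  by_contra! ⟨hx, hy⟩
  obtain ⟨p, hxp, hp⟩ := hD.2 x hx
  obtain ⟨q, hyq, hq⟩ := hD.2 y hy
  have hpq : p ≠ q := by
    rintro rfl
    exact (hM.1.adjd_of_mem hxy).1 (hp.eq_of_adjd hxp.symm hyq.symm)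
  have hp_free := hM.1.forall_notMem_of_pendant hp hxp.symm hxy (Sym2.mem_mk_left x y) <| by
    simp only [Sym2.mem_iff, not_or]
    exact ⟨hxp.1.symm, fun h => hy (h ▸ hp)⟩
  have hq_free := hM.1.forall_notMem_of_pendant hq hyq.symm hxy (Sym2.mem_mk_right x y) <| by
    simp only [Sym2.mem_iff, not_or]
    exact ⟨fun h => hx (h ▸ hq), hyq.1.symm⟩
  obtain ⟨N, hN, hcard⟩ := hM.1.exists_card_gt hxy hxp.symm hyq.symm hpq hp_free hq_free
  exact (hM.2 N hN).not_gt hcard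

theorem IsCycleChain.not_pendant_of_infix {c : List (Fin n)} (hc : IsCycleChain G c)
    {a v b : Fin n} (h : [a, v, b] <:+: c) : ¬ Pendant G v := by
  have hnd := hc.1.sublist h.sublist
  have hch := List.IsChain.infix hc.2.2 h
  simp only [List.nodup_cons, List.mem_cons, not_or] at hnd
  simp only [List.isChain_cons_cons, List.isChain_singleton, and_true] at hch
  exact not_pendant_of_adjd_of_adjd hch.1.symm hch.2 hnd.1.2.1

theorem IsAltChain.mk_mem {M : Finset (Sym2 (Fin n))} {l : List (Fin n)} (h : IsAltChain M l)
    {k : ℕ} (hk : k + 1 < l.length) (he : Even k) : s(l[k], l[k + 1]) ∈ M := by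
  have := (h.2 k (by simp [chainEdges]; omega)).mpr he
  simpa [chainEdges] using this

theorem IsAltChain.length_lt_five (hD : InClassD G) {M : Finset (Sym2 (Fin n))}
    (hM : IsMaxMatching G M) {c : List (Fin n)} (hc : IsCycleChain G c) (ha : IsAltChain M c) :
    c.length < 5 := by
  rcases c with _ | ⟨x₀, _ | ⟨x₁, _ | ⟨x₂, _ | ⟨x₃, _ | ⟨x₄, l⟩⟩⟩⟩⟩
  any_goals simp
  have hx₂ := hc.not_pendant_of_infix (a := x₁) (b := x₃) ⟨[x₀], x₄ :: l, rfl⟩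
  have hx₃ := hc.not_pendant_of_infix (a := x₂) (b := x₄) ⟨[x₀, x₁], l, rfl⟩
  have := hM.pendant_or_pendant hD (ha.mk_mem (k := 2) (by simp) (by decide))
  exact absurd (this.resolve_left hx₂) hx₃

theorem IsAltChain.eq_pair_or_eq_quad (hD : InClassD G) {M : Finset (Sym2 (Fin n))}
    (hM : IsMaxMatching G M) {i j : Fin n} {c : List (Fin n)} (hc : IsCycleChainBtw G i j c)
    (ha : IsAltChain M c) :
    c = [i, j] ∨ ∃ a b, c = [i, a, b, j] ∧ Pendant G i ∧ Pendant G j := by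
  have hlen := ha.length_lt_five hD hM hc.1
  have hodd := ha.1
  obtain ⟨hchain, hi, hj⟩ := hc
  rcases c with _ | ⟨x₀, _ | ⟨x₁, _ | ⟨x₂, _ | ⟨x₃, _ | ⟨x₄, l⟩⟩⟩⟩⟩
  · simp at hi
  · exact absurd hchain.2.1 (by simp)
  · left
    simp_all
  · simp [chainEdges, Nat.odd_iff] at hodd
  · right
    simp only [List.head?_cons, List.getLast?_cons_cons, List.getLast?_singleton,
      Option.some.injEq] at hi hj
    subst hi hj
    have he₀ := ha.mk_mem (k := 0) (by simp) (by decide)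
    have he₂ := ha.mk_mem (k := 2) (by simp) (by decide)
    have hx₁ := hchain.not_pendant_of_infix (a := x₀) (b := x₂) ⟨[], [x₃], rfl⟩
    have hx₂ := hchain.not_pendant_of_infix (a := x₁) (b := x₃) ⟨[x₀], [], rfl⟩
    exact ⟨x₁, x₂, rfl, (hM.pendant_or_pendant hD he₀).resolve_right hx₁,
      (hM.pendant_or_pendant hD he₂).resolve_left hx₂⟩
  · simp at hlen
    omega

theorem IsCycleChain.adjd_first_last {i a b j : Fin n} (h : IsCycleChain G [i, a, b, j]) :
    Adjd G i a ∧ Adjd G j b := by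
  have hch : List.IsChain (Adjd G) [i, a, b, j] := h.2.2
  simp only [List.isChain_cons_cons, List.isChain_singleton, and_true] at hch
  exact ⟨hch.1, hch.2.2.symm⟩

theorem IsCycleChain.not_quad_of_pendant {i j a b : Fin n} (hi : Pendant G i)
    (hij : IsCycleChain G [i, j]) : ¬ IsCycleChain G [i, a, b, j] := by
  intro h
  obtain rfl : a = j := hi.eq_of_adjd h.adjd_first_last.1 (List.isChain_pair.mp hij.2.2)
  simpa using h.1

theorem IsCycleChain.quad_eq_of_pendant {i j a b a' b' : Fin n} (hi : Pendant G i)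
    (hj : Pendant G j) (h : IsCycleChain G [i, a, b, j]) (h' : IsCycleChain G [i, a', b', j]) :
    [i, a, b, j] = [i, a', b', j] := by
  rw [hi.eq_of_adjd h.adjd_first_last.1 h'.adjd_first_last.1,
    hj.eq_of_adjd h.adjd_first_last.2 h'.adjd_first_last.2]

end

theorem alt_chain_unique_general {n : ℕ} (G : Fin n → Fin n → Prop)
    (hD : InClassD G) (i j : Fin n)
    (c c' : List (Fin n)) (M M' : Finset (Sym2 (Fin n)))
    (hM : IsMaxMatching G M) (hM' : IsMaxMatching G M')
    (hc : IsCycleChainBtw G i j c) (hc' : IsCycleChainBtw G i j c')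
    (ha : IsAltChain M c) (ha' : IsAltChain M' c') :
    c = c' := by
  rcases ha.eq_pair_or_eq_quad hD hM hc with rfl | ⟨a, b, rfl, hi, hj⟩ <;>
    rcases ha'.eq_pair_or_eq_quad hD hM' hc' with rfl | ⟨a', b', rfl, hi', -⟩
  · rfl
  · exact absurd hc'.1 (hc.1.not_quad_of_pendant hi')
  · exact absurd hc.1 (hc'.1.not_quad_of_pendant hi)
  · exact hc.1.quad_eq_of_pendant hi hj hc'.1

/-- Proposition: in a strongly connected digraph of class `𝒟`, the alternating cycle chain
between two given vertices (w.r.t. any maximum matchings) is unique. -/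
theorem alt_chain_unique {n : ℕ} (G : Fin n → Fin n → Prop)
    (hD : InClassD G) (hSC : StronglyConnected G) (i j : Fin n)
    (c c' : List (Fin n)) (M M' : Finset (Sym2 (Fin n)))
    (hM : IsMaxMatching G M) (hM' : IsMaxMatching G M')
    (hc : IsCycleChainBtw G i j c) (hc' : IsCycleChainBtw G i j c')
    (ha : IsAltChain M c) (ha' : IsAltChain M' c') :
    c = c' :=
  alt_chain_unique_general G hD i j c c' M M' hM hM' hc hc' ha ha'
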